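/- arXiv:math/0512526 — 6 statements merged into one kernel-verified Lean document; each statement's English description precedes it below -/
import Mathlib

section
/- The q-Witt bracket satisfies the weighted q-Jacobi identity: for all i, j, k ∈ ℤ, (2)_{q^i}{e_i,{e_j,e_k}_q}_q + (2)_{q^j}{e_j,{e_k,e_i}_q}_q + (2)_{q^k}{e_k,{e_i,e_j}_q}_q = 0, where {e_i,e_j}_q = [(j+1)_q - (i+1)_q] e_{i+j} and (2)_{q^i} = 1 + q^i. -/
/-- The q-integer `(n)_q = (1 - q^n)/(1 - q)`, for `n : ℤ`. -/
noncomputable def qInt {K : Type*} [Field K] (q : K) (n : ℤ) : K := (1 - q ^ n) / (1 - q)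

/-- The bracket of basis elements of the q-Witt algebra `W^q` (with basis `e_i`, `i : ℤ`,
modelled as `ℤ →₀ K`): `{e_i, e_j}_q = [(j+1)_q - (i+1)_q] e_{i+j}`. -/
noncomputable def wbr {K : Type*} [Field K] (q : K) (i j : ℤ) : ℤ →₀ K :=
  (qInt q (j + 1) - qInt q (i + 1)) • Finsupp.single (i + j) 1

/-- The bilinear extension of the q-Witt bracket to all of `W^q = ℤ →₀ K`. -/
noncomputable def wBr {K : Type*} [Field K] (q : K) (f g : ℤ →₀ K) : ℤ →₀ K :=
  f.sum fun i a => g.sum fun j b => (a * b) • wbr q i j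

lemma wBr_single_wbr {K : Type*} [Field K] (q : K) (i m n : ℤ) :
    wBr q (Finsupp.single i (1 : K)) (wbr q m n)
      = (qInt q (n + 1) - qInt q (m + 1)) • wbr q i (m + n) := by
  unfold wBr wbr
  rw [Finsupp.smul_single, smul_eq_mul, mul_one]
  rw [Finsupp.sum_single_index (by simp), Finsupp.sum_single_index (by simp)]
  rw [one_mul]

/-- the weighted q-Jacobi identity for the q-Witt algebra:
`(2)_{q^i} {e_i,{e_j,e_k}_q}_q + (2)_{q^j} {e_j,{e_k,e_i}_q}_q
  + (2)_{q^k} {e_k,{e_i,e_j}_q}_q = 0`, where `(2)_{q^i} = 1 + q^i`. -/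
theorem qWitt_weighted_jacobi {K : Type*} [Field K] (q : K)
    (hchar2 : (2 : K) ≠ 0) (hchar3 : (3 : K) ≠ 0) (hq0 : q ≠ 0) (hq1 : q ≠ 1)
    (i j k : ℤ) :
    (1 + q ^ i) • wBr q (Finsupp.single i (1 : K)) (wbr q j k)
      + (1 + q ^ j) • wBr q (Finsupp.single j (1 : K)) (wbr q k i)
      + (1 + q ^ k) • wBr q (Finsupp.single k (1 : K)) (wbr q i j) = 0 := by
  rw [wBr_single_wbr, wBr_single_wbr, wBr_single_wbr]
  unfold wbr
  have h1 : j + (k + i) = i + (j + k) := by ring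
  have h2 : k + (i + j) = i + (j + k) := by ring
  rw [h1, h2]
  simp only [Finsupp.smul_single, ← Finsupp.single_add, smul_eq_mul, mul_one]
  rw [Finsupp.single_eq_zero]
  have hq : (1 : K) - q ≠ 0 := sub_ne_zero.mpr hq1.symm
  unfold qInt
  have e1 : ∀ m : ℤ, q ^ (m + 1) = q ^ m * q := fun m => zpow_add_one₀ hq0 m
  have e2 : q ^ (j + k + 1) = q ^ j * q ^ k * q := by
    rw [zpow_add_one₀ hq0, zpow_add₀ hq0]
  have e3 : q ^ (k + i + 1) = q ^ k * q ^ i * q := by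
    rw [zpow_add_one₀ hq0, zpow_add₀ hq0]
  have e4 : q ^ (i + j + 1) = q ^ i * q ^ j * q := by
    rw [zpow_add_one₀ hq0, zpow_add₀ hq0]
  rw [e2, e3, e4, e1 i, e1 j, e1 k]
  field_simp
  ring
end

section
/- In the mixed algebra H^ε(1) = span{L_0,...,L_{l-1}} ⊕ W^ε(1,1) with brackets {L_i, L_j}_ε = 0, {e_{(i)}, L_j}_ε = ε^{i+1} binom(i+j, i+1)_ε L_{i+j}, and the ε-Witt bracket on the e_{(i)}, the weighted ε-Jacobi identity holds for all triples of the form (e_{(i)}, e_{(j)}, L_k): (2)_{ε^i}{e_{(i)},{e_{(j)},L_k}_ε}_ε + (2)_{ε^j}{e_{(j)},{L_k,e_{(i)}}_ε}_ε + (2)_{ε^k}{L_k,{e_{(i)},e_{(j)}}_ε}_ε = 0. -/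
/-- Gaussian binomial via the q-Pascal recursion. -/
def gaussBinom {K : Type*} [Field K] (q : K) : ℕ → ℕ → K
  | _, 0 => 1
  | 0, _ + 1 => 0
  | n + 1, k + 1 => gaussBinom q n k + q ^ (k + 1) * gaussBinom q n (k + 1)

/-- Structure constants of the ε-Witt bracket:
`{e_{(i)}, e_{(j)}}_ε = cW(i,j) e_{(i+j)}` (zero outside `−1 ≤ i+j ≤ l−2`). -/
noncomputable def cW {K : Type*} [Field K] (ε : K) (l : ℕ) (i j : ℤ) : K :=
  if -1 ≤ i + j ∧ i + j ≤ (l : ℤ) - 2 then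
    gaussBinom ε (i + j + 1).toNat (i + 1).toNat - gaussBinom ε (i + j + 1).toNat (j + 1).toNat
  else 0

/-- Structure constants of the mixed bracket in `H^ε(1)`:
`{e_{(i)}, L_j}_ε = dE(i,j) L_{i+j}` with `dE(i,j) = ε^{i+1} binom(i+j, i+1)_ε`
when `0 ≤ i+j ≤ l−1`, and `0` otherwise. -/
noncomputable def dE {K : Type*} [Field K] (ε : K) (l : ℕ) (i j : ℤ) : K :=
  if 0 ≤ i + j ∧ i + j ≤ (l : ℤ) - 1 then
    ε ^ (i + 1) * gaussBinom ε (i + j).toNat (i + 1).toNat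
  else 0

namespace GBAux
variable {K : Type*} [Field K] (q : K)

/-- geometric sum -/
def Sg (q : K) (n : ℕ) : K := ∑ t ∈ Finset.range n, q ^ t

@[simp] lemma gb_zero (n : ℕ) : gaussBinom q n 0 = 1 := by cases n <;> rfl

@[simp] lemma gb_zero_left (k : ℕ) : gaussBinom q 0 (k+1) = 0 := rfl

lemma gb_succ (n k : ℕ) :
    gaussBinom q (n+1) (k+1) = gaussBinom q n k + q ^ (k+1) * gaussBinom q n (k+1) := rfl

lemma gb_of_lt : ∀ {n k : ℕ}, n < k → gaussBinom q n k = 0 := by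
  intro n
  induction n with
  | zero => intro k hk; obtain ⟨k, rfl⟩ := Nat.exists_eq_succ_of_ne_zero (by omega : k ≠ 0); rfl
  | succ n ih =>
    intro k hk
    obtain ⟨k, rfl⟩ := Nat.exists_eq_succ_of_ne_zero (by omega : k ≠ 0)
    rw [gb_succ, ih (by omega), ih (by omega)]
    ring

lemma gb_self : ∀ n : ℕ, gaussBinom q n n = 1 := by
  intro n
  induction n with
  | zero => rfl
  | succ n ih => rw [gb_succ, ih, gb_of_lt q (by omega)]; ring

@[simp] lemma Sg_zero : Sg q 0 = 0 := rfl

lemma Sg_succ (n : ℕ) : Sg q (n+1) = Sg q n + q ^ n := Finset.sum_range_succ _ _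

@[simp] lemma Sg_one : Sg q 1 = 1 := by rw [Sg_succ, Sg_zero]; ring

lemma Sg_add (m n : ℕ) : Sg q (m + n) = Sg q m + q ^ m * Sg q n := by
  induction n with
  | zero => simp
  | succ n ih => rw [← Nat.add_assoc, Sg_succ, ih, Sg_succ, pow_add]; ring

lemma Sg_succ' (n : ℕ) : Sg q (n+1) = 1 + q * Sg q n := by
  rw [Nat.add_comm, Sg_add]; simp

lemma Sg_mul (n : ℕ) : Sg q n * (q - 1) = q ^ n - 1 := geom_sum_mul q n

lemma gb_one : ∀ n : ℕ, gaussBinom q n 1 = Sg q n := by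
  intro n
  induction n with
  | zero => simp
  | succ n ih =>
    rw [show (1:ℕ) = 0 + 1 from rfl, gb_succ, gb_zero, ih, Sg_succ']
    ring

end GBAux

namespace GBAux2
open GBAux
variable {K : Type*} [Field K] (q : K)

/-- alternative Pascal rule -/
lemma gb_succ' : ∀ (n : ℕ), ∀ k ≤ n,
    gaussBinom q (n+1) (k+1) = q ^ (n-k) * gaussBinom q n k + gaussBinom q n (k+1) := by
  intro n
  induction n with
  | zero =>
    intro k hk
    have hk0 : k = 0 := by omega
    subst hk0
    rw [gb_succ]
    simp
  | succ n ih =>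
    intro k hk
    by_cases hkn : k = n + 1
    · subst hkn
      rw [Nat.sub_self, gb_self q, gb_self q, gb_of_lt q (show n+1 < n+1+1 by omega)]
      ring
    · have hk' : k ≤ n := by omega
      rcases Nat.eq_zero_or_pos k with rfl | hkpos
      · rw [gb_succ, gb_zero, gb_one q, Nat.sub_zero]
        linear_combination Sg_succ q (n+1) - Sg_succ' q (n+1)
      · obtain ⟨k', rfl⟩ : ∃ k', k = k' + 1 := ⟨k - 1, by omega⟩
        obtain ⟨d, rfl⟩ : ∃ d, n = k' + 1 + d := ⟨n - (k'+1), by omega⟩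
        have e1 := ih k' (by omega)
        have e2 := ih (k'+1) (by omega)
        rw [show k'+1+d - k' = d+1 from by omega] at e1
        rw [show k'+1+d - (k'+1) = d from by omega] at e2
        rw [show k'+1+d+1 - (k'+1) = d+1 from by omega]
        have p1 := gb_succ q (k'+1+d) k'
        have p2 := gb_succ q (k'+1+d) (k'+1)
        have lhs := gb_succ q (k'+1+d+1) (k'+1)
        linear_combination lhs + e1 - q^(d+1) * p1 + q^(k'+1+1) * e2 - p2

lemma gb_symm : ∀ (n : ℕ), ∀ k ≤ n, gaussBinom q n k = gaussBinom q n (n-k) := by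
  intro n
  induction n with
  | zero =>
    intro k hk
    obtain rfl : k = 0 := by omega
    simp
  | succ n ih =>
    intro k hk
    rcases Nat.eq_zero_or_pos k with rfl | hkpos
    · rw [gb_zero, Nat.sub_zero, gb_self]
    obtain ⟨k', rfl⟩ : ∃ k', k = k' + 1 := ⟨k - 1, by omega⟩
    by_cases hkn : k' + 1 = n + 1
    · rw [hkn, Nat.sub_self, gb_self, gb_zero]
    · have hk'n : k' + 1 ≤ n := by omega
      obtain ⟨d, rfl⟩ : ∃ d, n = k' + 1 + d := ⟨n - (k'+1), by omega⟩
      rw [show k'+1+d+1 - (k'+1) = d+1 from by omega]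
      have p1 := gb_succ q (k'+1+d) k'
      have s1 := gb_succ' q (k'+1+d) d (by omega)
      rw [show k'+1+d - d = k'+1 from by omega] at s1
      have i1 := ih k' (by omega)
      rw [show k'+1+d - k' = d+1 from by omega] at i1
      have i2 := ih (k'+1) (by omega)
      rw [show k'+1+d - (k'+1) = d from by omega] at i2
      linear_combination p1 + i1 + q^(k'+1) * i2 - s1

/-- absorption -/
lemma gb_absorb : ∀ (n : ℕ), ∀ k : ℕ,
    gaussBinom q n (k+1) * Sg q (k+1) = gaussBinom q n k * Sg q (n-k) := by
  intro n
  induction n with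
  | zero =>
    intro k
    rcases Nat.eq_zero_or_pos k with rfl | hkpos
    · simp
    · rw [gb_zero_left, gb_of_lt q (show (0:ℕ) < k by omega), Nat.zero_sub, Sg_zero]
      ring
  | succ n ih =>
    have habs1 : ∀ k ≤ n, gaussBinom q (n+1) k * Sg q (n+1-k)
        = gaussBinom q n k * Sg q (n+1) := by
      intro k hk
      rcases Nat.eq_zero_or_pos k with rfl | hkpos
      · simp
      obtain ⟨k', rfl⟩ : ∃ k', k = k' + 1 := ⟨k - 1, by omega⟩
      obtain ⟨d, rfl⟩ : ∃ d, n = k' + 1 + d := ⟨n - (k'+1), by omega⟩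
      rw [show k'+1+d+1 - (k'+1) = d+1 from by omega]
      have p := gb_succ q (k'+1+d) k'
      have e := ih k'
      rw [show k'+1+d - k' = d+1 from by omega] at e
      have sadd : Sg q (k'+1+d+1) = Sg q (k'+1) + q^(k'+1) * Sg q (d+1) := by
        rw [show k'+1+d+1 = (k'+1)+(d+1) from by omega, Sg_add]
      linear_combination Sg q (d+1) * p - gaussBinom q (k'+1+d) (k'+1) * sadd - e
    intro k
    by_cases hk : k ≤ n
    · obtain ⟨d, rfl⟩ : ∃ d, n = k + d := ⟨n - k, by omega⟩
      rw [show k+d+1 - k = d+1 from by omega]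
      have p := gb_succ q (k+d) k
      have e := ih k
      rw [show k+d - k = d from by omega] at e
      have sadd : Sg q (k+d+1) = Sg q (k+1) + q^(k+1) * Sg q d := by
        rw [show k+d+1 = (k+1)+d from by omega, Sg_add]
      have h1 := habs1 k (by omega)
      rw [show k+d+1 - k = d+1 from by omega] at h1
      linear_combination Sg q (k+1) * p + q^(k+1) * e - gaussBinom q (k+d) k * sadd - h1
    · rw [gb_of_lt q (show n+1 < k+1 by omega)]
      by_cases hk1 : k = n + 1
      · subst hk1; rw [Nat.sub_self, Sg_zero]; ring
      · rw [gb_of_lt q (show n+1 < k by omega), show n+1-k = 0 from by omega, Sg_zero]; ring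

lemma gb_absorb1 (n k : ℕ) :
    gaussBinom q (n+1) k * Sg q (n+1-k) = gaussBinom q n k * Sg q (n+1) := by
  by_cases hk : k ≤ n
  · rcases Nat.eq_zero_or_pos k with rfl | hkpos
    · simp
    obtain ⟨k', rfl⟩ : ∃ k', k = k' + 1 := ⟨k - 1, by omega⟩
    obtain ⟨d, rfl⟩ : ∃ d, n = k' + 1 + d := ⟨n - (k'+1), by omega⟩
    rw [show k'+1+d+1 - (k'+1) = d+1 from by omega]
    have p := gb_succ q (k'+1+d) k'
    have e := gb_absorb q (k'+1+d) k'
    rw [show k'+1+d - k' = d+1 from by omega] at e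
    have sadd : Sg q (k'+1+d+1) = Sg q (k'+1) + q^(k'+1) * Sg q (d+1) := by
      rw [show k'+1+d+1 = (k'+1)+(d+1) from by omega, Sg_add]
    linear_combination Sg q (d+1) * p - gaussBinom q (k'+1+d) (k'+1) * sadd - e
  · rw [gb_of_lt q (show n < k by omega)]
    by_cases hk1 : k = n + 1
    · subst hk1; rw [Nat.sub_self, Sg_zero]; ring
    · rw [gb_of_lt q (show n+1 < k by omega)]; ring

/-- subset-of-a-subset -/
lemma gb_subset : ∀ (n : ℕ), ∀ a s : ℕ, a ≤ n →
    gaussBinom q n a * gaussBinom q (n-a) s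
      = gaussBinom q n (a+s) * gaussBinom q (a+s) a := by
  intro n
  induction n with
  | zero =>
    intro a s ha
    have : a = 0 := by omega
    subst this
    rcases Nat.eq_zero_or_pos s with rfl | hs
    · simp
    · simp [gb_of_lt q (show (0:ℕ) < s by omega)]
  | succ n ih =>
    intro a s ha
    rcases Nat.eq_zero_or_pos a with rfl | hapos
    · simp [gb_self]
    rcases Nat.eq_zero_or_pos s with rfl | hspos
    · simp only [Nat.add_zero, gb_zero, mul_one]
      rw [gb_self q a]; ring
    obtain ⟨a', rfl⟩ : ∃ a', a = a' + 1 := ⟨a - 1, by omega⟩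
    obtain ⟨s', rfl⟩ : ∃ s', s = s' + 1 := ⟨s - 1, by omega⟩
    by_cases han : a' + 1 ≤ n
    case neg =>
      have ha1 : a' + 1 = n + 1 := by omega
      rw [ha1, Nat.sub_self, gb_zero_left, gb_of_lt q (show n+1 < n+1+(s'+1) by omega)]
      ring
    case pos =>
      obtain ⟨d, rfl⟩ : ∃ d, n = a' + 1 + d := ⟨n - (a'+1), by omega⟩
      rw [show a'+1+d+1 - (a'+1) = d+1 from by omega,
        show a'+1+(s'+1) = a'+s'+2 from by omega]
      have pW := gb_succ q (a'+1+d) a'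
      have pR := gb_succ q d s'
      have e1 := ih a' (s'+1) (by omega)
      rw [show a'+1+d - a' = d+1 from by omega, show a'+(s'+1) = a'+s'+1 from by omega] at e1
      have e2 := ih (a'+1) s' (by omega)
      rw [show a'+1+d - (a'+1) = d from by omega, show a'+1+s' = a'+s'+1 from by omega] at e2
      have e3 := ih (a'+1) (s'+1) (by omega)
      rw [show a'+1+d - (a'+1) = d from by omega,
        show a'+1+(s'+1) = a'+s'+2 from by omega] at e3
      have pV : gaussBinom q (a'+s'+2) (a'+1)
          = gaussBinom q (a'+s'+1) a' + q^(a'+1) * gaussBinom q (a'+s'+1) (a'+1) := by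
        rw [show a'+s'+2 = (a'+s'+1)+1 from by omega]; exact gb_succ q (a'+s'+1) a'
      have pN : gaussBinom q (a'+1+d+1) (a'+s'+2)
          = gaussBinom q (a'+1+d) (a'+s'+1) + q^(a'+s'+2) * gaussBinom q (a'+1+d) (a'+s'+2) := by
        rw [show a'+s'+2 = (a'+s'+1)+1 from by omega]; exact gb_succ q (a'+1+d) (a'+s'+1)
      linear_combination gaussBinom q (d+1) (s'+1) * pW + e1
        + (q^(a'+1) * gaussBinom q (a'+1+d) (a'+1)) * pR + q^(a'+1) * e2
        + q^(a'+1) * q^(s'+1) * e3 - gaussBinom q (a'+s'+2) (a'+1) * pN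
        - gaussBinom q (a'+1+d) (a'+s'+1) * pV

end GBAux2

section Main
open GBAux GBAux2
variable {K : Type*} [Field K]

lemma mainPos (q : K) (a b c : ℕ)
    (hSa : Sg q (a+1) ≠ 0) (hSb : Sg q (b+1) ≠ 0) :
    (q + q^(a+1)) * q^(a+b+3) * gaussBinom q (b+c+1) (b+1) * gaussBinom q (a+b+c+1) (a+1)
    - (q + q^(b+1)) * q^(a+b+3) * gaussBinom q (a+c+1) (a+1) * gaussBinom q (a+b+c+1) (b+1)
    - (q + q^(c+2)) * q^(a+b+2)
        * (gaussBinom q (a+b+1) (a+1) - gaussBinom q (a+b+1) (b+1))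
        * gaussBinom q (a+b+c+1) (a+b+1) = 0 := by
  have hP1 := gb_succ q (b+c) b
  have hP2 := gb_succ q (a+c) a
  have hS1 := gb_subset q (a+b+c+1) (a+1) b (by omega)
  rw [show a+b+c+1-(a+1) = b+c from by omega, show (a+1)+b = a+b+1 from by omega] at hS1
  have hS2 := gb_subset q (a+b+c+1) (a+1) (b+1) (by omega)
  rw [show a+b+c+1-(a+1) = b+c from by omega, show (a+1)+(b+1) = a+b+2 from by omega] at hS2
  have hS3 := gb_subset q (a+b+c+1) (b+1) a (by omega)
  rw [show a+b+c+1-(b+1) = a+c from by omega, show (b+1)+a = a+b+1 from by omega] at hS3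
  have hS4 := gb_subset q (a+b+c+1) (b+1) (a+1) (by omega)
  rw [show a+b+c+1-(b+1) = a+c from by omega, show (b+1)+(a+1) = a+b+2 from by omega] at hS4
  have hSym := gb_symm q (a+b+2) (a+1) (by omega)
  rw [show a+b+2-(a+1) = b+1 from by omega] at hSym
  have pG1 : gaussBinom q (a+b+2) (a+1)
      = gaussBinom q (a+b+1) a + q^(a+1) * gaussBinom q (a+b+1) (a+1) := by
    rw [show a+b+2 = (a+b+1)+1 from by omega]; exact gb_succ q (a+b+1) a
  have sG1 := gb_symm q (a+b+1) a (by omega)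
  rw [show a+b+1-a = b+1 from by omega] at sG1
  have pG2 : gaussBinom q (a+b+2) (b+1)
      = gaussBinom q (a+b+1) b + q^(b+1) * gaussBinom q (a+b+1) (b+1) := by
    rw [show a+b+2 = (a+b+1)+1 from by omega]
    have := gb_succ q (a+b+1) b
    rw [show a+b+1+1 = a+b+2 from by omega] at this
    rw [show a+b+1+1 = a+b+2 from by omega]
    exact this
  have sG2 := gb_symm q (a+b+1) b (by omega)
  rw [show a+b+1-b = a+1 from by omega] at sG2
  have habs := gb_absorb q (a+b+c+1) (a+b+1)
  rw [show a+b+1+1 = a+b+2 from by omega, show a+b+c+1-(a+b+1) = c from by omega] at habs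
  have u1 := gb_absorb1 q (a+b+1) (a+1)
  rw [show a+b+1+1 = a+b+2 from by omega, show a+b+2-(a+1) = b+1 from by omega] at u1
  have u2 := gb_absorb1 q (a+b+1) (b+1)
  rw [show a+b+1+1 = a+b+2 from by omega, show a+b+2-(b+1) = a+1 from by omega] at u2
  have hga := Sg_mul q (a+1)
  have hgb := Sg_mul q (b+1)
  have hgc := Sg_mul q c
  set sa := Sg q (a+1)
  set sb := Sg q (b+1)
  set GMa := gaussBinom q (a+b+c+1) (a+1)
  set GMb := gaussBinom q (a+b+c+1) (b+1)
  set P1 := gaussBinom q (a+b+c+1) (a+b+1)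
  set P2 := gaussBinom q (a+b+c+1) (a+b+2)
  set G := gaussBinom q (a+b+2) (a+1)
  set Gp := gaussBinom q (a+b+2) (b+1)
  set A := gaussBinom q (a+b+1) (a+1)
  set B := gaussBinom q (a+b+1) (b+1)
  have key : sa * (sb * (
      (q + q^(a+1)) * q^(a+b+3) * gaussBinom q (b+c+1) (b+1) * GMa
      - (q + q^(b+1)) * q^(a+b+3) * gaussBinom q (a+c+1) (a+1) * GMb
      - (q + q^(c+2)) * q^(a+b+2) * (A - B) * P1)) = 0 := by
    linear_combination
      ((q+q^(a+1))*q^(a+b+3)*GMa*sa*sb) * hP1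
      + ((q+q^(a+1))*q^(a+b+3)*sa*sb) * hS1
      + ((q+q^(a+1))*q^(a+2*b+4)*sa*sb) * hS2
      - ((q+q^(b+1))*q^(a+b+3)*GMb*sa*sb) * hP2
      - ((q+q^(b+1))*q^(a+b+3)*sa*sb) * hS3
      - ((q+q^(b+1))*q^(2*a+b+4)*sa*sb) * hS4
      + (sa*sb*q^(2*a+b+4)*(q+q^(b+1))*P2
          + sa*sb*q^(a+b+3)*P1
          - q^(a+b+4)*(q-1)*P2*sa*sa*sb) * hSym
      - (q^(a+b+4)*sa*sb*P2*G) * hgb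
      + (q^(a+b+4)*sa*sb*P2*G) * hga
      + (q^(a+b+4)*(q-1)*P2*sa*sb) * u1
      - (q^(a+b+4)*(q-1)*P2*sa*sb) * u2
      + (q^(a+b+4)*(q-1)*(A-B)*sa*sb) * habs
      + (q^(a+b+4)*(A-B)*P1*sa*sb) * hgc
      - (sa*sb*q^(a+b+3)*P1) * pG1
      - (sa*sb*q^(a+b+3)*P1) * sG1
      + (sa*sb*q^(a+b+3)*P1) * pG2
      + (sa*sb*q^(a+b+3)*P1) * sG2
  rcases mul_eq_zero.mp key with h | h
  · exact absurd h hSa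
  rcases mul_eq_zero.mp h with h' | h'
  · exact absurd h' hSb
  exact h'

end Main

section LemP
open GBAux GBAux2
variable {K : Type*} [Field K]

lemma lemP (q : K) (M a b c : ℕ) (h : a + b + c = M + 2)
    (hSa : a ≠ 0 → Sg q a ≠ 0) (hSb : b ≠ 0 → Sg q b ≠ 0) :
    (q + q^a) * q^(a+b+1) * gaussBinom q (M+1-a) b * gaussBinom q M a
    - (q + q^b) * q^(a+b+1) * gaussBinom q (M+1-b) a * gaussBinom q M b
    - (q + q^(c+1)) * q^(a+b) * (gaussBinom q (M+1-c) a - gaussBinom q (M+1-c) b)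
        * gaussBinom q M (M+1-c) = 0 := by
  rcases Nat.eq_zero_or_pos c with rfl | hcpos
  · -- c = 0
    have h3 : gaussBinom q M (M+1-0) = 0 := by
      rw [show M+1-0 = M+1 from by omega]; exact gb_of_lt q (by omega)
    by_cases hb : b = 0
    · subst hb
      have h1 : gaussBinom q M a = 0 := gb_of_lt q (by omega)
      have h2 : gaussBinom q (M+1-0) a = 0 := by
        rw [show M+1-0 = M+1 from by omega]; exact gb_of_lt q (by omega)
      rw [h1, h2, h3]; ring
    · by_cases ha : a = 0
      · subst ha
        have h1 : gaussBinom q M b = 0 := gb_of_lt q (by omega)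
        have h2 : gaussBinom q (M+1-0) b = 0 := by
          rw [show M+1-0 = M+1 from by omega]; exact gb_of_lt q (by omega)
        rw [h1, h2, h3]; ring
      · have h1 : gaussBinom q (M+1-a) b = 0 := by
          rw [show M+1-a = b-1 from by omega]; exact gb_of_lt q (by omega)
        have h2 : gaussBinom q (M+1-b) a = 0 := by
          rw [show M+1-b = a-1 from by omega]; exact gb_of_lt q (by omega)
        rw [h1, h2, h3]; ring
  · obtain ⟨c', rfl⟩ : ∃ c', c = c' + 1 := ⟨c - 1, by omega⟩
    by_cases ha : a = 0
    · subst ha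
      by_cases hb : b = 0
      · subst hb; ring
      · obtain ⟨b', rfl⟩ : ∃ b', b = b' + 1 := ⟨b - 1, by omega⟩
        obtain rfl : M = b' + c' := by omega
        rw [show b'+c'+1-0 = b'+c'+1-0 from rfl]
        rw [show b'+c'+1-0 = b'+c'+1 from by omega]
        rw [show b'+c'+1-(b'+1) = c' from by omega]
        rw [show b'+c'+1-(c'+1) = b' from by omega]
        simp only [gb_zero]
        rw [gb_of_lt q (show b' < b'+1 from by omega)]
        have pas := gb_succ q (b'+c') b'
        have absd := gb_absorb q (b'+c') b'
        rw [show b'+c'-b' = c' from by omega] at absd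
        have gmb := Sg_mul q (b'+1)
        have gmc := Sg_mul q c'
        linear_combination ((q+1)*q^(b'+2)) * pas + (q^(b'+3)*(q-1)) * absd
          - (q^(b'+3) * gaussBinom q (b'+c') (b'+1)) * gmb
          + (q^(b'+3) * gaussBinom q (b'+c') b') * gmc
    · by_cases hb : b = 0
      · subst hb
        obtain ⟨a', rfl⟩ : ∃ a', a = a' + 1 := ⟨a - 1, by omega⟩
        obtain rfl : M = a' + c' := by omega
        rw [show a'+c'+1-(a'+1) = c' from by omega]
        rw [show a'+c'+1-0 = a'+c'+1 from by omega]
        rw [show a'+c'+1-(c'+1) = a' from by omega]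
        simp only [gb_zero]
        rw [gb_of_lt q (show a' < a'+1 from by omega)]
        have pas := gb_succ q (a'+c') a'
        have absd := gb_absorb q (a'+c') a'
        rw [show a'+c'-a' = c' from by omega] at absd
        have gma := Sg_mul q (a'+1)
        have gmc := Sg_mul q c'
        linear_combination (-((q+1)*q^(a'+2))) * pas - (q^(a'+3)*(q-1)) * absd
          + (q^(a'+3) * gaussBinom q (a'+c') (a'+1)) * gma
          - (q^(a'+3) * gaussBinom q (a'+c') a') * gmc
      · obtain ⟨a', rfl⟩ : ∃ a', a = a' + 1 := ⟨a - 1, by omega⟩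
        obtain ⟨b', rfl⟩ : ∃ b', b = b' + 1 := ⟨b - 1, by omega⟩
        obtain rfl : M = a' + b' + c' + 1 := by omega
        rw [show a'+b'+c'+1+1-(a'+1) = b'+c'+1 from by omega]
        rw [show a'+b'+c'+1+1-(b'+1) = a'+c'+1 from by omega]
        rw [show a'+b'+c'+1+1-(c'+1) = a'+b'+1 from by omega]
        have := mainPos q a' b' c' (hSa (by omega)) (hSb (by omega))
        linear_combination this

end LemP

section Root
open GBAux GBAux2
variable {K : Type*} [Field K]

lemma Sg_root_ne (ε : K) (l : ℕ) (hε : IsPrimitiveRoot ε l) (t : ℕ)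
    (h1 : 1 ≤ t) (h2 : t < l) : Sg ε t ≠ 0 := by
  intro h0
  have hm := Sg_mul ε t
  rw [h0, zero_mul] at hm
  have hpow : ε ^ t = 1 := sub_eq_zero.mp hm.symm
  exact hε.pow_ne_one_of_pos_of_lt (by omega) h2 hpow

lemma Sg_root_l (ε : K) (l : ℕ) (hε : IsPrimitiveRoot ε l) (hl : 2 ≤ l) :
    Sg ε l = 0 := by
  have h1 : Sg ε l * (ε - 1) = 0 := by
    rw [Sg_mul, hε.pow_eq_one, sub_self]
  rcases mul_eq_zero.mp h1 with h | h
  · exact h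
  · exact absurd (sub_eq_zero.mp h) (hε.ne_one (by omega))

lemma gb_root (ε : K) (l : ℕ) (hε : IsPrimitiveRoot ε l) :
    ∀ t : ℕ, 1 ≤ t → t < l → gaussBinom ε l t = 0 := by
  intro t
  induction t with
  | zero => intro h _; omega
  | succ t ih =>
    intro _ h2
    rcases Nat.eq_zero_or_pos t with rfl | htpos
    · rw [gb_one]
      exact Sg_root_l ε l hε (by omega)
    · have iht := ih (by omega) (by omega)
      have ab := gb_absorb ε l t
      rw [iht, zero_mul] at ab
      rcases mul_eq_zero.mp ab with h | h
      · exact h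
      · exact absurd h (Sg_root_ne ε l hε (t+1) (by omega) h2)

end Root

section
open GBAux GBAux2

/-- in the mixed algebra `H^ε(1)`, the weighted ε-Jacobi identity for
triples `(e_{(i)}, e_{(j)}, L_k)`:
`(2)_{ε^i}{e_{(i)},{e_{(j)},L_k}_ε}_ε + (2)_{ε^j}{e_{(j)},{L_k,e_{(i)}}_ε}_ε
  + (2)_{ε^k}{L_k,{e_{(i)},e_{(j)}}_ε}_ε = 0`
(all brackets landing on `L_{i+j+k}`, so the identity is an identity of coefficients;
`{L_k, e_{(i)}}_ε = −{e_{(i)}, L_k}_ε`). -/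
theorem eps_holomorph_mixed_jacobi {K : Type*} [Field K]
    (hchar2 : (2 : K) ≠ 0) (hchar3 : (3 : K) ≠ 0)
    (ε : K) (l : ℕ) (hε : IsPrimitiveRoot ε l)
    (i j k : ℤ) (hi : -1 ≤ i ∧ i ≤ (l : ℤ) - 2) (hj : -1 ≤ j ∧ j ≤ (l : ℤ) - 2)
    (hk : 0 ≤ k ∧ k ≤ (l : ℤ) - 1) :
    (1 + ε ^ i) * (dE ε l j k * dE ε l i (j + k))
      + (1 + ε ^ j) * (-(dE ε l i k) * dE ε l j (k + i))
      + (1 + ε ^ k) * (cW ε l i j * (-(dE ε l (i + j) k))) = 0 := by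
  obtain ⟨hi1, hi2⟩ := hi
  obtain ⟨hj1, hj2⟩ := hj
  obtain ⟨hk1, hk2⟩ := hk
  have hl1 : 1 ≤ l := by omega
  have hεl : ε ^ l = 1 := hε.pow_eq_one
  have hε0 : ε ≠ 0 := by
    intro h
    rw [h, zero_pow (show l ≠ 0 from by omega)] at hεl
    exact zero_ne_one hεl
  by_cases hm : 0 ≤ i + j + k ∧ i + j + k ≤ (l:ℤ) - 1
  case neg =>
    have e1 : dE ε l i (j+k) = 0 := by
      simp only [dE]; rw [if_neg (show ¬(0 ≤ i+(j+k) ∧ i+(j+k) ≤ (l:ℤ)-1) from by omega)]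
    have e2 : dE ε l j (k+i) = 0 := by
      simp only [dE]; rw [if_neg (show ¬(0 ≤ j+(k+i) ∧ j+(k+i) ≤ (l:ℤ)-1) from by omega)]
    have e3 : dE ε l (i+j) k = 0 := by
      simp only [dE]; rw [if_neg (show ¬(0 ≤ (i+j)+k ∧ (i+j)+k ≤ (l:ℤ)-1) from by omega)]
    rw [e1, e2, e3]; ring
  case pos =>
    by_cases hij : i = j
    · subst hij
      have hcw : cW ε l i i = 0 := by simp [cW]
      rw [hcw, show k + i = i + k from Int.add_comm k i]
      ring
    · obtain ⟨a, ha⟩ : ∃ a : ℕ, (a:ℤ) = i + 1 := ⟨(i+1).toNat, Int.toNat_of_nonneg (by omega)⟩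
      obtain ⟨b, hb⟩ : ∃ b : ℕ, (b:ℤ) = j + 1 := ⟨(j+1).toNat, Int.toNat_of_nonneg (by omega)⟩
      obtain ⟨c, hc⟩ : ∃ c : ℕ, (c:ℤ) = k := ⟨k.toNat, Int.toNat_of_nonneg (by omega)⟩
      obtain ⟨M, hM⟩ : ∃ M : ℕ, (M:ℤ) = i + j + k :=
        ⟨(i+j+k).toNat, Int.toNat_of_nonneg (by omega)⟩
      obtain ⟨d, hd⟩ : ∃ d : ℕ, a + b = d + 1 := ⟨a+b-1, by omega⟩
      have habc : a + b + c = M + 2 := by omega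
      have hSa' : a ≠ 0 → Sg ε a ≠ 0 := fun h0 => Sg_root_ne ε l hε a (by omega) (by omega)
      have hSb' : b ≠ 0 → Sg ε b ≠ 0 := fun h0 => Sg_root_ne ε l hε b (by omega) (by omega)
      have lp := lemP ε M a b c habc hSa' hSb'
      rw [show M+1-c = d from by omega] at lp
      have T1 : dE ε l j k * dE ε l i (j + k)
          = (ε^b * gaussBinom ε (M+1-a) b) * (ε^a * gaussBinom ε M a) := by
        have e2 : dE ε l i (j+k) = ε^a * gaussBinom ε M a := by
          simp only [dE]
          rw [if_pos (show 0 ≤ i+(j+k) ∧ i+(j+k) ≤ (l:ℤ)-1 from by omega)]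
          rw [show (i+(j+k)).toNat = M from by omega, show (i+1).toNat = a from by omega,
            show i+1 = (a:ℤ) from ha.symm, zpow_natCast]
        by_cases hjk : 0 ≤ j + k ∧ j + k ≤ (l:ℤ) - 1
        · have e1 : dE ε l j k = ε^b * gaussBinom ε (M+1-a) b := by
            simp only [dE]
            rw [if_pos hjk, show (j+k).toNat = M+1-a from by omega,
              show (j+1).toNat = b from by omega, show j+1 = (b:ℤ) from hb.symm, zpow_natCast]
          rw [e1, e2]
        · have e1 : dE ε l j k = 0 := by simp only [dE]; rw [if_neg hjk]
          rw [e1, e2]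
          rcases (show j + k = -1 ∨ j + k ≥ (l:ℤ) from by omega) with hlo | hhi
          · rw [gb_of_lt ε (show M < a from by omega)]; ring
          · have : gaussBinom ε (M+1-a) b = 0 := by
              rw [show M+1-a = l from by omega]
              exact gb_root ε l hε b (by omega) (by omega)
            rw [this]; ring
      have T2 : dE ε l i k * dE ε l j (k + i)
          = (ε^a * gaussBinom ε (M+1-b) a) * (ε^b * gaussBinom ε M b) := by
        have e2 : dE ε l j (k+i) = ε^b * gaussBinom ε M b := by
          simp only [dE]
          rw [if_pos (show 0 ≤ j+(k+i) ∧ j+(k+i) ≤ (l:ℤ)-1 from by omega)]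
          rw [show (j+(k+i)).toNat = M from by omega, show (j+1).toNat = b from by omega,
            show j+1 = (b:ℤ) from hb.symm, zpow_natCast]
        by_cases hik : 0 ≤ i + k ∧ i + k ≤ (l:ℤ) - 1
        · have e1 : dE ε l i k = ε^a * gaussBinom ε (M+1-b) a := by
            simp only [dE]
            rw [if_pos hik, show (i+k).toNat = M+1-b from by omega,
              show (i+1).toNat = a from by omega, show i+1 = (a:ℤ) from ha.symm, zpow_natCast]
          rw [e1, e2]
        · have e1 : dE ε l i k = 0 := by simp only [dE]; rw [if_neg hik]
          rw [e1, e2]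
          rcases (show i + k = -1 ∨ i + k ≥ (l:ℤ) from by omega) with hlo | hhi
          · rw [gb_of_lt ε (show M < b from by omega)]; ring
          · have : gaussBinom ε (M+1-b) a = 0 := by
              rw [show M+1-b = l from by omega]
              exact gb_root ε l hε a (by omega) (by omega)
            rw [this]; ring
      have T3 : cW ε l i j * dE ε l (i+j) k
          = (gaussBinom ε d a - gaussBinom ε d b) * (ε^d * gaussBinom ε M d) := by
        have e2 : dE ε l (i+j) k = ε^d * gaussBinom ε M d := by
          simp only [dE]
          rw [if_pos (show 0 ≤ (i+j)+k ∧ (i+j)+k ≤ (l:ℤ)-1 from by omega)]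
          rw [show ((i+j)+k).toNat = M from by omega, show (i+j+1).toNat = d from by omega,
            show i+j+1 = (d:ℤ) from by omega, zpow_natCast]
        by_cases hcw : -1 ≤ i + j ∧ i + j ≤ (l:ℤ) - 2
        · have e1 : cW ε l i j = gaussBinom ε d a - gaussBinom ε d b := by
            simp only [cW]
            rw [if_pos hcw, show (i+j+1).toNat = d from by omega,
              show (i+1).toNat = a from by omega, show (j+1).toNat = b from by omega]
          rw [e1, e2]
        · have e1 : cW ε l i j = 0 := by simp only [cW]; rw [if_neg hcw]
          have z1 : gaussBinom ε d a = 0 := by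
            rw [show d = l from by omega]
            exact gb_root ε l hε a (by omega) (by omega)
          have z2 : gaussBinom ε d b = 0 := by
            rw [show d = l from by omega]
            exact gb_root ε l hε b (by omega) (by omega)
          rw [e1, e2, z1, z2]; ring
      have hεi : ε ^ i * ε = ε ^ a := by
        rw [← zpow_add_one₀ hε0 i, ← ha, zpow_natCast]
      have hεj : ε ^ j * ε = ε ^ b := by
        rw [← zpow_add_one₀ hε0 j, ← hb, zpow_natCast]
      have hεk : ε ^ k = ε ^ c := by
        rw [← hc, zpow_natCast]
      have hεd : ε ^ d * ε = ε ^ a * ε ^ b := by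
        rw [← pow_succ, show d+1 = a+b from hd.symm, pow_add]
      have main : (ε * ε) * ((1 + ε ^ i) * (dE ε l j k * dE ε l i (j + k))
          + (1 + ε ^ j) * (-(dE ε l i k) * dE ε l j (k + i))
          + (1 + ε ^ k) * (cW ε l i j * (-(dE ε l (i + j) k)))) = (ε * ε) * 0 := by
        rw [mul_zero]
        linear_combination lp + (ε * (dE ε l j k * dE ε l i (j+k))) * hεi
          - (ε * (dE ε l i k * dE ε l j (k+i))) * hεj
          - (ε * ε * (cW ε l i j * dE ε l (i+j) k)) * hεk
          - (ε * (1 + ε^c) * (gaussBinom ε d a - gaussBinom ε d b) * gaussBinom ε M d) * hεd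
          + (ε * (ε + ε^a)) * T1 - (ε * (ε + ε^b)) * T2 - (ε * ε * (1 + ε^c)) * T3
      exact mul_left_cancel₀ (mul_ne_zero hε0 hε0) main

end
end

section
/- The q-Virasoro bracket {e_i, e_j}_q = [(j+1)_q − (i+1)_q] e_{i+j} + δ_{i+j,0} · ((i−1)_q (i)_q (i+1)_q)/(q^i (2)_{q^i} (2)_q (3)_q) · L_0, together with {e_i, L_0}_q = 0, satisfies antisymmetry: the coefficient c(i,−i) = ((i−1)_q(i)_q(i+1)_q)/(q^i(2)_{q^i}(2)_q(3)_q) satisfies c(−i, i) = −c(i, −i) for all i ∈ ℤ. -/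
/-- The central coefficient of the q-Virasoro bracket:
`c(i,−i) = (i−1)_q (i)_q (i+1)_q / (q^i (2)_{q^i} (2)_q (3)_q)`. -/
noncomputable def virCoeff {K : Type*} [Field K] (q : K) (i : ℤ) : K :=
  (qInt q (i - 1) * qInt q i * qInt q (i + 1)) /
    (q ^ i * (1 + q ^ i) * qInt q 2 * qInt q 3)

lemma qInt_neg {K : Type*} [Field K] (q : K) (hq0 : q ≠ 0) (n : ℤ) :
    qInt q (-n) = -(q ^ (-n)) * qInt q n := by
  have h : q ^ (-n) * q ^ n = 1 := by
    rw [← zpow_add₀ hq0]; simp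
  have key : 1 - q ^ (-n) = -(q ^ (-n)) * (1 - q ^ n) := by linear_combination -h
  unfold qInt
  rw [key, mul_div_assoc]

/-- antisymmetry of the q-Virasoro central term:
`c(−i, i) = −c(i, −i)` for all `i ∈ ℤ`. -/
theorem virCoeff_antisymm {K : Type*} [Field K] (q : K)
    (hchar2 : (2 : K) ≠ 0) (hchar3 : (3 : K) ≠ 0)
    (hq0 : q ≠ 0) (hq1 : q ≠ 1) (hden : ∀ i : ℤ, 1 + q ^ i ≠ 0)
    (h2 : qInt q 2 ≠ 0) (h3 : qInt q 3 ≠ 0) (i : ℤ) :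
    virCoeff q (-i) = -virCoeff q i := by
  unfold virCoeff
  have e1 : -i - 1 = -(i + 1) := by ring
  have e2 : -i + 1 = -(i - 1) := by ring
  rw [e1, e2, qInt_neg q hq0, qInt_neg q hq0, qInt_neg q hq0]
  have hpi : q ^ i ≠ 0 := zpow_ne_zero i hq0
  have hpni : q ^ (-i) ≠ 0 := zpow_ne_zero _ hq0
  have hdi := hden i
  have hdni := hden (-i)
  have hinv : q ^ (-i) = (q ^ i)⁻¹ := zpow_neg q i
  have hadd1 : q ^ (i + 1) = q ^ i * q := by
    rw [zpow_add₀ hq0, zpow_one]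
  have hsub1 : q ^ (i - 1) = q ^ i / q := by
    rw [zpow_sub₀ hq0, zpow_one]
  have hnadd1 : q ^ (-(i + 1)) = (q ^ i * q)⁻¹ := by
    rw [zpow_neg, hadd1]
  have hnsub1 : q ^ (-(i - 1)) = (q ^ i / q)⁻¹ := by
    rw [zpow_neg, hsub1]
  rw [hinv, hnadd1, hnsub1]
  have hdni' : 1 + (q ^ i)⁻¹ ≠ 0 := by rw [← hinv]; exact hdni
  have hD1 : (q ^ i)⁻¹ * (1 + (q ^ i)⁻¹) * qInt q 2 * qInt q 3 ≠ 0 :=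
    mul_ne_zero (mul_ne_zero (mul_ne_zero (inv_ne_zero hpi) hdni') h2) h3
  have hD2 : q ^ i * (1 + q ^ i) * qInt q 2 * qInt q 3 ≠ 0 :=
    mul_ne_zero (mul_ne_zero (mul_ne_zero hpi hdi) h2) h3
  rw [← neg_div, div_eq_div_iff hD1 hD2]
  field_simp
  ring
end

section
/- The q-Virasoro algebra Vir^q = span{e_i (i ∈ ℤ), L_0} with {e_i, L_0}_q = 0 and {e_i, e_j}_q = [(j+1)_q − (i+1)_q] e_{i+j} + δ_{i+j,0} ((i−1)_q(i)_q(i+1)_q)/(q^i(2)_{q^i}(2)_q(3)_q) L_0 satisfies the weighted q-Jacobi identity: for all i, j, r ∈ ℤ, (2)_{q^i}{e_i,{e_j,e_r}_q}_q + (2)_{q^j}{e_j,{e_r,e_i}_q}_q + (2)_{q^r}{e_r,{e_i,e_j}_q}_q = 0. -/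
/-- Witt structure constants: `o(i,j) = (j+1)_q − (i+1)_q`. -/
noncomputable def oW {K : Type*} [Field K] (q : K) (i j : ℤ) : K :=
  qInt q (j + 1) - qInt q (i + 1)

/-- The q-Virasoro algebra `Vir^q = span{e_i (i ∈ ℤ)} ⊕ K·L_0`, elements being pairs
(Witt part, coefficient of `L_0`). The bracket of basis elements:
`{e_i,e_j}_q = o(i,j) e_{i+j} + δ_{i+j,0} c(i,−i) L_0` (and `{e_i,L_0}_q = 0`). -/
noncomputable def virBr {K : Type*} [Field K] (q : K) (i j : ℤ) : (ℤ →₀ K) × K :=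
  (oW q i j • Finsupp.single (i + j) 1, if i + j = 0 then virCoeff q i else 0)

/-- Witt-part scalar identity. -/
lemma witt_aux {K : Type*} [Field K] (q : K) (hq0 : q ≠ 0) (hq1 : q ≠ 1) (i j r : ℤ) :
    (1 + q ^ i) * (oW q j r * oW q i (j + r))
      + (1 + q ^ j) * (oW q r i * oW q j (r + i))
      + (1 + q ^ r) * (oW q i j * oW q r (i + j)) = 0 := by
  have hd : (1 : K) - q ≠ 0 := sub_ne_zero.mpr (Ne.symm hq1)
  simp only [oW, qInt, zpow_add₀ hq0, zpow_one]
  field_simp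
  ring

set_option maxHeartbeats 1000000 in
/-- `oW` as a single fraction. -/
lemma oW_eq {K : Type*} [Field K] (q : K) (hq0 : q ≠ 0) (j r : ℤ) :
    oW q j r = (q * q ^ j - q * q ^ r) / (1 - q) := by
  simp only [oW, qInt, zpow_add₀ hq0, zpow_one]
  rw [div_sub_div_same]
  congr 1
  ring

set_option maxHeartbeats 1000000 in
/-- `virCoeff` as a single fraction. -/
lemma virCoeff_eq {K : Type*} [Field K] (q : K)
    (hq0 : q ≠ 0) (hq1 : q ≠ 1) (i : ℤ) (hdi : 1 + q ^ i ≠ 0)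
    (h2 : qInt q 2 ≠ 0) (h3 : qInt q 3 ≠ 0)
    (h2' : (1 : K) - q ^ (2 : ℕ) ≠ 0) (h3' : (1 : K) - q ^ (3 : ℕ) ≠ 0) :
    virCoeff q i = (q - q ^ i) * (1 - q ^ i) * (1 - q ^ i * q) /
      (q * (1 - q) * (q ^ i * (1 + q ^ i)) * ((1 - q ^ (2 : ℕ)) * (1 - q ^ (3 : ℕ)))) := by
  have hd : (1 : K) - q ≠ 0 := sub_ne_zero.mpr (Ne.symm hq1)
  have hi : q ^ i ≠ 0 := zpow_ne_zero i hq0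
  rw [virCoeff, div_eq_div_iff
    (mul_ne_zero (mul_ne_zero (mul_ne_zero hi hdi) h2) h3)
    (mul_ne_zero (mul_ne_zero (mul_ne_zero hq0 hd) (mul_ne_zero hi hdi))
      (mul_ne_zero h2' h3'))]
  simp only [qInt, zpow_add₀ hq0, zpow_sub₀ hq0, zpow_one, zpow_ofNat, pow_one]
  field_simp

set_option maxHeartbeats 1000000 in
/-- A single weighted central term as one fraction. -/
lemma term_aux {K : Type*} [Field K] (q : K)
    (hq0 : q ≠ 0) (hq1 : q ≠ 1) (i j r : ℤ) (hdi : 1 + q ^ i ≠ 0)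
    (h2 : qInt q 2 ≠ 0) (h3 : qInt q 3 ≠ 0)
    (h2' : (1 : K) - q ^ (2 : ℕ) ≠ 0) (h3' : (1 : K) - q ^ (3 : ℕ) ≠ 0) :
    (1 + q ^ i) * (oW q j r * virCoeff q i)
      = (q ^ j - q ^ r) * ((q - q ^ i) * (1 - q ^ i) * (1 - q ^ i * q))
        / (q ^ i * ((1 - q) ^ 2 * (1 - q ^ (2 : ℕ)) * (1 - q ^ (3 : ℕ)))) := by
  have hd : (1 : K) - q ≠ 0 := sub_ne_zero.mpr (Ne.symm hq1)
  have hi : q ^ i ≠ 0 := zpow_ne_zero i hq0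
  rw [oW_eq q hq0 j r, virCoeff_eq q hq0 hq1 i hdi h2 h3 h2' h3', div_mul_div_comm,
    ← mul_div_assoc, div_eq_div_iff
      (mul_ne_zero hd (mul_ne_zero (mul_ne_zero (mul_ne_zero hq0 hd) (mul_ne_zero hi hdi))
        (mul_ne_zero h2' h3')))
      (mul_ne_zero hi (mul_ne_zero (mul_ne_zero (pow_ne_zero 2 hd) h2') h3'))]
  ring

set_option maxHeartbeats 1000000 in
/-- Central-part scalar identity (on the plane `i + j + r = 0`). -/
lemma central_aux {K : Type*} [Field K] (q : K)
    (hq0 : q ≠ 0) (hq1 : q ≠ 1) (hden : ∀ i : ℤ, 1 + q ^ i ≠ 0)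
    (h2 : qInt q 2 ≠ 0) (h3 : qInt q 3 ≠ 0)
    (i j r : ℤ) (h : i + j + r = 0) :
    (1 + q ^ i) * (oW q j r * virCoeff q i)
      + (1 + q ^ j) * (oW q r i * virCoeff q j)
      + (1 + q ^ r) * (oW q i j * virCoeff q r) = 0 := by
  have hd : (1 : K) - q ≠ 0 := sub_ne_zero.mpr (Ne.symm hq1)
  have h2' : (1 : K) - q ^ (2 : ℕ) ≠ 0 := fun hh => h2 (by simp [qInt, zpow_ofNat, hh])
  have h3' : (1 : K) - q ^ (3 : ℕ) ≠ 0 := fun hh => h3 (by simp [qInt, zpow_ofNat, hh])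
  have hi : q ^ i ≠ 0 := zpow_ne_zero i hq0
  have hj : q ^ j ≠ 0 := zpow_ne_zero j hq0
  have hr : q ^ r ≠ 0 := zpow_ne_zero r hq0
  have habc : q ^ i * q ^ j * q ^ r = 1 := by
    rw [← zpow_add₀ hq0, ← zpow_add₀ hq0, h, zpow_zero]
  rw [term_aux q hq0 hq1 i j r (hden i) h2 h3 h2' h3',
    term_aux q hq0 hq1 j r i (hden j) h2 h3 h2' h3',
    term_aux q hq0 hq1 r i j (hden r) h2 h3 h2' h3']
  have hD : (1 - q) ^ 2 * (1 - q ^ (2 : ℕ)) * (1 - q ^ (3 : ℕ)) ≠ 0 :=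
    mul_ne_zero (mul_ne_zero (pow_ne_zero 2 hd) h2') h3'
  generalize q ^ i = a at *
  generalize q ^ j = b at *
  generalize q ^ r = c at *
  rw [div_add_div _ _ (mul_ne_zero hi hD) (mul_ne_zero hj hD),
    div_add_div _ _ (mul_ne_zero (mul_ne_zero hi hD) (mul_ne_zero hj hD))
      (mul_ne_zero hr hD),
    div_eq_zero_iff]
  left
  linear_combination (q * ((1 - q) ^ 2 * (1 - q ^ (2 : ℕ)) * (1 - q ^ (3 : ℕ))) ^ 2 *
    (b * c ^ 2 + a * b ^ 2 + a ^ 2 * c - b ^ 2 * c - a * c ^ 2 - a ^ 2 * b)) * habc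

/-- the q-Virasoro algebra satisfies the weighted q-Jacobi identity:
`(2)_{q^i}{e_i,{e_j,e_r}_q}_q + (2)_{q^j}{e_j,{e_r,e_i}_q}_q + (2)_{q^r}{e_r,{e_i,e_j}_q}_q = 0`
for all `i, j, r ∈ ℤ` (since `{e_i, L_0}_q = 0`, the term `{e_i,{e_j,e_r}_q}_q`
equals `o(j,r)·{e_i,e_{j+r}}_q`). -/
theorem qVirasoro_weighted_jacobi {K : Type*} [Field K] (q : K)
    (hchar2 : (2 : K) ≠ 0) (hchar3 : (3 : K) ≠ 0)
    (hq0 : q ≠ 0) (hq1 : q ≠ 1) (hden : ∀ i : ℤ, 1 + q ^ i ≠ 0)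
    (h2 : qInt q 2 ≠ 0) (h3 : qInt q 3 ≠ 0)
    (i j r : ℤ) :
    (1 + q ^ i) • (oW q j r • virBr q i (j + r))
      + (1 + q ^ j) • (oW q r i • virBr q j (r + i))
      + (1 + q ^ r) • (oW q i j • virBr q r (i + j)) = 0 := by
  have h1 : i + (j + r) = i + j + r := by ring
  have h2i : j + (r + i) = i + j + r := by ring
  have h3i : r + (i + j) = i + j + r := by ring
  refine Prod.ext ?_ ?_
  · simp only [virBr, Prod.smul_fst, Prod.fst_add, Prod.fst_zero, smul_smul,
      h1, h2i, h3i]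
    rw [← add_smul, ← add_smul]
    have hw := witt_aux q hq0 hq1 i j r
    have : (1 + q ^ i) * oW q j r * oW q i (j + r)
        + (1 + q ^ j) * oW q r i * oW q j (r + i)
        + (1 + q ^ r) * oW q i j * oW q r (i + j) = 0 := by
      linear_combination hw
    rw [this, zero_smul]
  · simp only [virBr, Prod.smul_snd, Prod.snd_add, Prod.snd_zero, smul_eq_mul,
      h1, h2i, h3i]
    by_cases h0 : i + j + r = 0
    · simp only [h0, if_true]
      linear_combination central_aux q hq0 hq1 hden h2 h3 i j r h0
    · simp [h0]
end

section
/- Any 2-cocycle c(i,j) for a q-central extension of the q-Witt algebra which vanishes for i+j ≠ 0 and satisfies c(1,−1) = 0 is determined by Δ(i) := q^i(2)_{q^i} c(i,−i) satisfying the recursion Δ(r) = ((r+1)_q/(r−2)_q) Δ(r−1) for r ≥ 3; hence Δ(i) = ((i+1)_q(i)_q(i−1)_q)/((2)_q(3)_q) Δ(2) for all i ≥ 2. -/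
theorem qInt_one {K : Type*} [Field K] {q : K} (hq : q ≠ 1) : qInt q 1 = 1 := by
  rw [qInt, zpow_one]
  exact div_self (sub_ne_zero.mpr hq.symm)

theorem mul_qInt_sub_two_eq_of_cocycle {K : Type*} [Field K] {q : K} (hq : q ≠ 0)
    {Δ : ℤ → K} (hΔ1 : Δ 1 = 0)
    (hcoc : ∀ i j : ℤ,
      Δ (i + j) * (q ^ (-i) - q ^ (-j))
        = Δ j * (q ^ (2 * i) - q ^ (-j)) - Δ i * (q ^ (2 * j) - q ^ (-i)))
    (r : ℤ) : Δ r * qInt q (r - 2) = qInt q (r + 1) * Δ (r - 1) := by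
  have h := hcoc 1 (r - 1)
  rw [add_sub_cancel, hΔ1, zero_mul, sub_zero] at h
  have hpow : ∀ m : ℤ, q ^ m * q ^ (r - 1) = q ^ (m + (r - 1)) := fun m => (zpow_add₀ hq _ _).symm
  have key : Δ r * (1 - q ^ (r - 2)) = (1 - q ^ (r + 1)) * Δ (r - 1) := by
    have := congrArg (· * q ^ (r - 1)) h
    simp only [sub_mul, mul_assoc, hpow] at this
    rw [show (-1 : ℤ) + (r - 1) = r - 2 by ring, neg_add_cancel, zpow_zero,
      show 2 * 1 + (r - 1) = r + 1 by ring] at this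
    linear_combination -this
  simp only [qInt, mul_div_assoc', div_mul_eq_mul_div, key]

theorem eq_mul_of_eq_div_mul_pred {K : Type*} [Field K] {a f : ℤ → K} (ha1 : a 1 = 1)
    (ha : ∀ n, 1 ≤ n → a n ≠ 0) (hrec : ∀ r, 3 ≤ r → f r = a (r + 1) / a (r - 2) * f (r - 1))
    {i : ℤ} (hi : 2 ≤ i) : f i = a (i + 1) * a i * a (i - 1) / (a 2 * a 3) * f 2 := by
  have h2 := ha 2 (by norm_num)
  have h3 := ha 3 (by norm_num)
  induction i, hi using Int.leInduction with
  | base => norm_num [ha1]; field_simp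
  | succ n hn ih =>
    have hn1 := ha (n - 1) (by omega)
    rw [hrec (n + 1) (by omega), add_sub_cancel_right, ih,
      show n + 1 - 2 = n - 1 by ring, show n + 1 + 1 = n + 2 by ring]
    field_simp

/-- a 2-cocycle for a q-central extension of the q-Witt algebra,
vanishing off `i+j = 0` and normalized by `c(1,−1) = 0`, is determined via
`Δ(i) = q^i (2)_{q^i} c(i,−i)`: with `Δ(1) = 0` and the cocycle relation
`Δ(i+j)(q^{−i} − q^{−j}) = Δ(j)(q^{2i} − q^{−j}) − Δ(i)(q^{2j} − q^{−i})`,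
one gets the recursion `Δ(r) = ((r+1)_q/(r−2)_q) Δ(r−1)` for `r ≥ 3`,
and hence `Δ(i) = ((i+1)_q(i)_q(i−1)_q)/((2)_q(3)_q) Δ(2)` for all `i ≥ 2`. -/
theorem qVirasoro_cocycle_determined {K : Type*} [Field K] (q : K)
    (hq0 : q ≠ 0) (hq1 : q ≠ 1) (hgen : ∀ n : ℤ, n ≠ 0 → qInt q n ≠ 0)
    (Δ : ℤ → K) (hΔ1 : Δ 1 = 0)
    (hcoc : ∀ i j : ℤ,
      Δ (i + j) * (q ^ (-i) - q ^ (-j))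
        = Δ j * (q ^ (2 * i) - q ^ (-j)) - Δ i * (q ^ (2 * j) - q ^ (-i))) :
    (∀ r : ℤ, 3 ≤ r → Δ r = (qInt q (r + 1) / qInt q (r - 2)) * Δ (r - 1)) ∧
    (∀ i : ℤ, 2 ≤ i →
      Δ i = (qInt q (i + 1) * qInt q i * qInt q (i - 1)) / (qInt q 2 * qInt q 3) * Δ 2) := by
  have hrec : ∀ r : ℤ, 3 ≤ r → Δ r = (qInt q (r + 1) / qInt q (r - 2)) * Δ (r - 1) := fun r hr => by
    rw [div_mul_eq_mul_div, eq_div_iff (hgen _ (by omega))]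
    exact mul_qInt_sub_two_eq_of_cocycle hq0 hΔ1 hcoc r
  exact ⟨hrec, fun i hi =>
    eq_mul_of_eq_div_mul_pred (qInt_one hq1) (fun n hn => hgen n (by omega)) hrec hi⟩
end

section
/- In U^ε, the elements z_j = e_{(j)}^l for j ≠ 0 (−1 ≤ j ≤ l−2) and z_0 = (e_{(0)} − 1/(1−ε))^l are central: [e_{(i)}, z_j] = 0 for all −1 ≤ i ≤ l−2. -/
open TensorAlgebra

/-- Basis index set of the ε-Witt algebra `W^ε(1,1)`: integers `−1 ≤ i ≤ l−2`. -/
abbrev WIdx (l : ℕ) := {i : ℤ // -1 ≤ i ∧ i ≤ (l : ℤ) - 2}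

/-- The ε-Witt bracket `{e_{(i)}, e_{(j)}}_ε` of basis elements (as an element of
`W^ε(1,1) = WIdx l →₀ K`), zero when `i+j` is out of range. -/
noncomputable def epsBr {K : Type*} [Field K] (ε : K) (l : ℕ) (a b : WIdx l) :
    WIdx l →₀ K :=
  if h : -1 ≤ a.1 + b.1 ∧ a.1 + b.1 ≤ (l : ℤ) - 2 then
    (gaussBinom ε (a.1 + b.1 + 1).toNat (a.1 + 1).toNat
      - gaussBinom ε (a.1 + b.1 + 1).toNat (b.1 + 1).toNat) •
        Finsupp.single (⟨a.1 + b.1, h⟩ : WIdx l) 1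
  else 0

/-- Defining relations of `U^ε = U(W^ε(1,1))`:
`ε^{i+1} e_{(i)} e_{(j)} − ε^{j+1} e_{(j)} e_{(i)} = {e_{(i)}, e_{(j)}}_ε`. -/
inductive epsRel (K : Type*) [Field K] (ε : K) (l : ℕ) :
    TensorAlgebra K (WIdx l →₀ K) → TensorAlgebra K (WIdx l →₀ K) → Prop
  | brk (a b : WIdx l) : epsRel K ε l
      (ε ^ (a.1 + 1) • (ι K (Finsupp.single a (1 : K)) * ι K (Finsupp.single b 1))
        - ε ^ (b.1 + 1) • (ι K (Finsupp.single b (1 : K)) * ι K (Finsupp.single a 1)))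
      (ι K (epsBr ε l a b))

/-- The universal enveloping algebra `U^ε` of the ε-Witt algebra. -/
noncomputable abbrev epsUEA (K : Type*) [Field K] (ε : K) (l : ℕ) :=
  RingQuot (epsRel K ε l)

/-- The generator `e_{(i)}` of `U^ε`. -/
noncomputable def epsGen {K : Type*} [Field K] (ε : K) (l : ℕ) (a : WIdx l) :
    epsUEA K ε l :=
  RingQuot.mkAlgHom K (epsRel K ε l) (ι K (Finsupp.single a (1 : K)))

/-! ### Auxiliary facts about the Gaussian binomial -/

section GaussAux

variable {K : Type*} [Field K] (q : K)

lemma eW_gaussBinom_zero (n : ℕ) : gaussBinom q n 0 = 1 := by cases n <;> rfl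

lemma eW_gaussBinom_of_lt {q : K} : ∀ {n k : ℕ}, n < k → gaussBinom q n k = 0
  | 0, k + 1, _ => rfl
  | n + 1, k + 1, h => by
      rw [gaussBinom, eW_gaussBinom_of_lt (show n < k by omega),
        eW_gaussBinom_of_lt (show n < k + 1 by omega)]
      ring

lemma eW_gaussBinom_self : ∀ n : ℕ, gaussBinom q n n = 1
  | 0 => rfl
  | n + 1 => by
      rw [gaussBinom, eW_gaussBinom_of_lt (Nat.lt_succ_self n), eW_gaussBinom_self n]; ring

lemma eW_gaussBinom_one_mul : ∀ n : ℕ, gaussBinom q n 1 * (1 - q) = 1 - q ^ n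
  | 0 => by simp [gaussBinom]
  | n + 1 => by
      rw [show (1:ℕ) = 0 + 1 from rfl, gaussBinom, eW_gaussBinom_zero, add_mul,
        mul_assoc, eW_gaussBinom_one_mul n]
      ring

lemma eW_gaussBinom_succ_self_mul :
    ∀ n : ℕ, gaussBinom q (n + 1) n * (1 - q) = 1 - q ^ (n + 1)
  | 0 => by simp [eW_gaussBinom_zero]
  | n + 1 => by
      rw [gaussBinom, eW_gaussBinom_self, add_mul, mul_assoc, eW_gaussBinom_succ_self_mul n]
      ring

lemma eW_gaussBinom_pascal : ∀ n : ℕ, ∀ a b : ℕ, a + b = n →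
    gaussBinom q (a + b + 1) (a + 1) * (1 - q ^ (a + 1))
      = gaussBinom q (a + b + 1) a * (1 - q ^ (b + 1)) := by
  intro n
  induction n using Nat.strong_induction_on with
  | _ n ih =>
    rintro a b rfl
    match a, b with
    | 0, b => simp [eW_gaussBinom_zero, eW_gaussBinom_one_mul, pow_succ]
    | a + 1, 0 =>
        rw [eW_gaussBinom_self, pow_one, one_mul,
          show a + 1 + 0 + 1 = a + 1 + 1 from rfl, eW_gaussBinom_succ_self_mul]
    | a + 1, b + 1 =>
        have h1 := ih (a + 1 + b) (by omega) (a + 1) b rfl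
        have h2 := ih (a + (b + 1)) (by omega) a (b + 1) rfl
        rw [show a + (b + 1) + 1 = a + 1 + b + 1 by omega] at h2
        have eL : gaussBinom q (a + 1 + b + 1 + 1) (a + 1 + 1)
            = gaussBinom q (a + 1 + b + 1) (a + 1)
              + q ^ (a + 1 + 1) * gaussBinom q (a + 1 + b + 1) (a + 1 + 1) := by
          rw [gaussBinom]
        have eR : gaussBinom q (a + 1 + b + 1 + 1) (a + 1)
            = gaussBinom q (a + 1 + b + 1) a
              + q ^ (a + 1) * gaussBinom q (a + 1 + b + 1) (a + 1) := by
          rw [gaussBinom]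
        rw [show a + 1 + (b + 1) + 1 = a + 1 + b + 1 + 1 by omega, eL, eR]
        linear_combination (q ^ (a + 1 + 1)) * h1 + h2

lemma eW_gaussBinom_root (l : ℕ) (hq : q ^ l = 1) (hq0 : q ≠ 0) :
    ∀ k : ℕ, 1 ≤ k → k ≤ l → gaussBinom q l k * (1 - q ^ k) = 0 := by
  intro k
  induction k with
  | zero => intro h; omega
  | succ k ihk =>
    intro _ hkl
    rcases Nat.eq_zero_or_pos k with rfl | hk
    · rw [pow_one, eW_gaussBinom_one_mul, hq, sub_self]
    · have hp := eW_gaussBinom_pascal q (l - 1) k (l - k - 1) (by omega)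
      rw [show k + (l - k - 1) + 1 = l by omega, show l - k - 1 + 1 = l - k by omega] at hp
      have hqk : q ^ k ≠ 0 := pow_ne_zero _ hq0
      have hinv : q ^ (l - k) = (q ^ k)⁻¹ := by
        refine eq_inv_of_mul_eq_one_left ?_
        rw [← pow_add, show l - k + k = l by omega, hq]
      have h0 : gaussBinom q l k * (1 - q ^ k) = 0 := ihk hk (by omega)
      rw [hp, hinv]
      calc gaussBinom q l k * (1 - (q ^ k)⁻¹)
          = -(q ^ k)⁻¹ * (gaussBinom q l k * (1 - q ^ k)) := by field_simp; ring
        _ = 0 := by rw [h0, mul_zero]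

lemma eW_gaussBinom_root_eq_zero (l : ℕ) (hq : q ^ l = 1) (hq0 : q ≠ 0) (k : ℕ)
    (hkl : k ≤ l) (hk1 : q ^ k ≠ 1) : gaussBinom q l k = 0 := by
  have hk : 1 ≤ k := by
    rcases Nat.eq_zero_or_pos k with rfl | h
    · simp at hk1
    · exact h
  have h := eW_gaussBinom_root q l hq hq0 k hk hkl
  have h2 : (1 : K) - q ^ k ≠ 0 := sub_ne_zero.mpr (Ne.symm hk1)
  exact (mul_eq_zero.mp h).resolve_right h2

end GaussAux

/-! ### The abstract q-binomial expansion in an algebra -/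

section ExpandAux

variable {K : Type*} [Field K]

/-- Coefficients in the q-binomial expansion. -/
noncomputable def eWccoef (ε : K) (j i : ℤ) (T : ℤ → K) (n k : ℕ) : K :=
  ε ^ (((n : ℤ) - k) * (j - i)) * gaussBinom (ε ^ (-j)) n k
    * ∏ m ∈ Finset.range k, T (i + m * j)

lemma eWccoef_rec (ε : K) (hε0 : ε ≠ 0) (j i : ℤ) (T : ℤ → K) (n : ℕ) :
    ∀ k : ℕ, eWccoef ε j i T (n + 1) k
      = eWccoef ε j i T n k * ε ^ (j - i - k * j)
        + (match k with
           | 0 => 0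
           | k' + 1 => eWccoef ε j i T n k' * T (i + k' * j))
  | 0 => by
      simp only [eWccoef, Finset.range_zero, Finset.prod_empty, mul_one, Nat.cast_zero,
        gaussBinom]
      rw [add_zero, ← zpow_add₀ hε0]
      congr 1
      push_cast
      ring
  | k' + 1 => by
      simp only [eWccoef]
      rw [gaussBinom, Finset.prod_range_succ]
      rw [show ((ε ^ (-j)) ^ (k' + 1) : K) = ε ^ (-j * ((k' : ℤ) + 1)) by
        rw [← zpow_natCast (ε ^ (-j)) (k' + 1), ← zpow_mul]; norm_num]
      have e1 : ε ^ (((n : ℤ) - ((k' : ℤ) + 1)) * (j - i)) * ε ^ (j - i - ((k' : ℤ) + 1) * j)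
          = ε ^ ((((n : ℤ) + 1) - ((k' : ℤ) + 1)) * (j - i)) * ε ^ (-j * ((k' : ℤ) + 1)) := by
        rw [← zpow_add₀ hε0, ← zpow_add₀ hε0]; congr 1; ring
      have e2 : (ε ^ (((n : ℤ) - (k' : ℤ)) * (j - i)) : K)
          = ε ^ ((((n : ℤ) + 1) - ((k' : ℤ) + 1)) * (j - i)) := by
        congr 1; ring
      push_cast
      linear_combination (-(gaussBinom (ε ^ (-j)) n (k' + 1)
          * (∏ m ∈ Finset.range k', T (i + (m : ℤ) * j)) * T (i + (k' : ℤ) * j))) * e1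
        + (-(gaussBinom (ε ^ (-j)) n k'
          * (∏ m ∈ Finset.range k', T (i + (m : ℤ) * j)) * T (i + (k' : ℤ) * j))) * e2

lemma eWccoef_of_lt (ε : K) (j i : ℤ) (T : ℤ → K) {n k : ℕ} (h : n < k) :
    eWccoef ε j i T n k = 0 := by
  rw [eWccoef, eW_gaussBinom_of_lt h, mul_zero, zero_mul]

lemma eW_expand {A : Type*} [Ring A] [Algebra K A] (ε : K) (hε0 : ε ≠ 0)
    (j : ℤ) (x : A) (E : ℤ → A) (T : ℤ → K)
    (hrel : ∀ i : ℤ, E i * x = ε ^ (j - i) • (x * E i) + T i • E (i + j)) (i : ℤ) :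
    ∀ n : ℕ, E i * x ^ n = ∑ k ∈ Finset.range (n + 1),
      eWccoef ε j i T n k • (x ^ (n - k) * E (i + k * j))
  | 0 => by simp [eWccoef, gaussBinom]
  | n + 1 => by
    have ih := eW_expand ε hε0 j x E T hrel i n
    have step : ∀ k ∈ Finset.range (n + 1),
        (eWccoef ε j i T n k • (x ^ (n - k) * E (i + k * j))) * x
        = (eWccoef ε j i T n k * ε ^ (j - i - k * j)) • (x ^ (n + 1 - k) * E (i + k * j))
          + (eWccoef ε j i T n k * T (i + k * j)) •
              (x ^ (n - k) * E (i + ((k : ℤ) + 1) * j)) := by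
      intro k hk
      have hkn : k ≤ n := by simpa [Nat.lt_succ_iff] using hk
      rw [smul_mul_assoc, mul_assoc, hrel (i + k * j)]
      rw [mul_add, smul_add, mul_smul_comm, mul_smul_comm, smul_smul, smul_smul]
      congr 2
      · ring
      · rw [← mul_assoc, ← pow_succ]
        congr 2
        omega
      · congr 1
        ring
    have hsplit : ∀ k ∈ Finset.range (n + 2),
        eWccoef ε j i T (n + 1) k • (x ^ (n + 1 - k) * E (i + k * j))
        = (eWccoef ε j i T n k * ε ^ (j - i - k * j)) • (x ^ (n + 1 - k) * E (i + k * j))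
          + (match k with
             | 0 => (0 : K)
             | k' + 1 => eWccoef ε j i T n k' * T (i + k' * j)) •
              (x ^ (n + 1 - k) * E (i + k * j)) := by
      intro k _
      rw [← add_smul, ← eWccoef_rec ε hε0 j i T n k]
    have hA : ∑ k ∈ Finset.range (n + 2),
          (eWccoef ε j i T n k * ε ^ (j - i - k * j)) • (x ^ (n + 1 - k) * E (i + k * j))
        = ∑ k ∈ Finset.range (n + 1),
          (eWccoef ε j i T n k * ε ^ (j - i - k * j)) • (x ^ (n + 1 - k) * E (i + k * j)) := by
      rw [Finset.sum_range_succ, eWccoef_of_lt ε j i T (Nat.lt_succ_self n), zero_mul,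
        zero_smul, add_zero]
    have hB : ∑ k ∈ Finset.range (n + 2),
          (match k with
           | 0 => (0 : K)
           | k' + 1 => eWccoef ε j i T n k' * T (i + k' * j)) •
            (x ^ (n + 1 - k) * E (i + k * j))
        = ∑ k ∈ Finset.range (n + 1),
          (eWccoef ε j i T n k * T (i + k * j)) • (x ^ (n - k) * E (i + ((k : ℤ) + 1) * j)) := by
      rw [Finset.sum_range_succ']
      simp only [zero_smul, add_zero]
      refine Finset.sum_congr rfl fun k hk => ?_
      have h1 : n + 1 - (k + 1) = n - k := by omega
      have h2 : i + ((k + 1 : ℕ) : ℤ) * j = i + ((k : ℤ) + 1) * j := by push_cast; ring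
      rw [h1, h2]
    calc E i * x ^ (n + 1) = (E i * x ^ n) * x := by rw [pow_succ, mul_assoc]
      _ = (∑ k ∈ Finset.range (n + 1),
            eWccoef ε j i T n k • (x ^ (n - k) * E (i + k * j))) * x := by rw [ih]
      _ = ∑ k ∈ Finset.range (n + 1),
            (eWccoef ε j i T n k • (x ^ (n - k) * E (i + k * j))) * x := Finset.sum_mul ..
      _ = ∑ k ∈ Finset.range (n + 1),
            ((eWccoef ε j i T n k * ε ^ (j - i - k * j)) • (x ^ (n + 1 - k) * E (i + k * j))
              + (eWccoef ε j i T n k * T (i + k * j)) •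
                  (x ^ (n - k) * E (i + ((k : ℤ) + 1) * j))) := Finset.sum_congr rfl step
      _ = (∑ k ∈ Finset.range (n + 1),
            (eWccoef ε j i T n k * ε ^ (j - i - k * j)) • (x ^ (n + 1 - k) * E (i + k * j)))
          + ∑ k ∈ Finset.range (n + 1),
            (eWccoef ε j i T n k * T (i + k * j)) •
              (x ^ (n - k) * E (i + ((k : ℤ) + 1) * j)) := Finset.sum_add_distrib
      _ = ∑ k ∈ Finset.range (n + 2),
            eWccoef ε j i T (n + 1) k • (x ^ (n + 1 - k) * E (i + k * j)) := by
          rw [← hA, ← hB, ← Finset.sum_add_distrib]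
          exact (Finset.sum_congr rfl hsplit).symm

end ExpandAux

/-! ### Instantiation in `U^ε` -/

section UEAAux

variable {K : Type*} [Field K]

/-- Extension of the generators to all of `ℤ`, zero outside the index range. -/
noncomputable def eWE (ε : K) (l : ℕ) (i : ℤ) : epsUEA K ε l :=
  if h : -1 ≤ i ∧ i ≤ (l : ℤ) - 2 then epsGen ε l ⟨i, h⟩ else 0

/-- Structure constant for moving `e_(i)` past `e_(j)`. -/
noncomputable def eWT (ε : K) (l : ℕ) (j i : ℤ) : K :=
  if (-1 ≤ i ∧ i ≤ (l : ℤ) - 2) ∧ (-1 ≤ i + j ∧ i + j ≤ (l : ℤ) - 2) then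
    ε ^ (-(i + 1)) *
      (gaussBinom ε (i + j + 1).toNat (i + 1).toNat
        - gaussBinom ε (i + j + 1).toNat (j + 1).toNat)
  else 0

lemma eW_gen_rel (ε : K) (l : ℕ) (a b : WIdx l) :
    ε ^ (a.1 + 1) • (epsGen ε l a * epsGen ε l b)
      - ε ^ (b.1 + 1) • (epsGen ε l b * epsGen ε l a)
    = if h : -1 ≤ a.1 + b.1 ∧ a.1 + b.1 ≤ (l : ℤ) - 2 then
        (gaussBinom ε (a.1 + b.1 + 1).toNat (a.1 + 1).toNat
          - gaussBinom ε (a.1 + b.1 + 1).toNat (b.1 + 1).toNat) • epsGen ε l ⟨a.1 + b.1, h⟩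
      else 0 := by
  have h := RingQuot.mkAlgHom_rel K (epsRel.brk (K := K) (ε := ε) (l := l) a b)
  rw [map_sub, map_smul, map_smul, map_mul, map_mul] at h
  unfold epsBr at h
  simp only [epsGen]
  split_ifs at h ⊢ with hr
  · rwa [map_smul, map_smul] at h
  · rwa [map_zero, map_zero] at h

lemma eW_move (ε : K) {l : ℕ} (hε0 : ε ≠ 0) (j : WIdx l) (i : ℤ) :
    eWE ε l i * epsGen ε l j
      = ε ^ (j.1 - i) • (epsGen ε l j * eWE ε l i) + eWT ε l j.1 i • eWE ε l (i + j.1) := by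
  by_cases hi : -1 ≤ i ∧ i ≤ (l : ℤ) - 2
  · have h := eW_gen_rel ε l ⟨i, hi⟩ j
    have h2 : epsGen ε l ⟨i, hi⟩ * epsGen ε l j
        = ε ^ (j.1 - i) • (epsGen ε l j * epsGen ε l ⟨i, hi⟩)
          + ε ^ (-(i + 1)) •
            (if hr : -1 ≤ i + j.1 ∧ i + j.1 ≤ (l : ℤ) - 2 then
              (gaussBinom ε (i + j.1 + 1).toNat (i + 1).toNat
                - gaussBinom ε (i + j.1 + 1).toNat (j.1 + 1).toNat) • epsGen ε l ⟨i + j.1, hr⟩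
            else 0) := by
      have h3 := sub_eq_iff_eq_add.mp h
      have h4 := congrArg (fun z => ε ^ (-(i + 1)) • z) h3
      simp only [smul_add, smul_smul, ← zpow_add₀ hε0] at h4
      rw [show -(i + 1) + (i + 1) = 0 by ring, zpow_zero, one_smul] at h4
      rw [h4, show -(i + 1) + (j.1 + 1) = j.1 - i by ring, add_comm]
    rw [eWE, dif_pos hi, h2]
    congr 1
    by_cases hr : -1 ≤ i + j.1 ∧ i + j.1 ≤ (l : ℤ) - 2
    · rw [dif_pos hr, eWE, dif_pos hr, eWT, if_pos ⟨hi, hr⟩, smul_smul]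
    · rw [dif_neg hr, eWE, dif_neg hr, eWT, if_neg (by tauto), smul_zero, zero_smul]
  · rw [eWE, dif_neg hi, eWT, if_neg (by tauto), zero_mul, mul_zero, smul_zero,
      zero_smul, add_zero]

end UEAAux

/-- in `U^ε`, the elements `z_j = e_{(j)}^l` (for `j ≠ 0`) and
`z_0 = (e_{(0)} − 1/(1−ε))^l` are central: they commute with every generator
`e_{(i)}`, `−1 ≤ i ≤ l−2`. -/
theorem epsUEA_central_elements {K : Type*} [Field K]
    (hchar2 : (2 : K) ≠ 0) (hchar3 : (3 : K) ≠ 0)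
    (ε : K) (l : ℕ) (hl : 2 ≤ l) (hε : IsPrimitiveRoot ε l) :
    (∀ i j : WIdx l, j.1 ≠ 0 →
      epsGen ε l i * (epsGen ε l j) ^ l = (epsGen ε l j) ^ l * epsGen ε l i) ∧
    (∀ i : WIdx l,
      epsGen ε l i *
          (epsGen ε l ⟨0, by constructor <;> omega⟩
            - algebraMap K (epsUEA K ε l) (1 / (1 - ε))) ^ l
        = (epsGen ε l ⟨0, by constructor <;> omega⟩
            - algebraMap K (epsUEA K ε l) (1 / (1 - ε))) ^ l * epsGen ε l i) := by
  have hε0 : ε ≠ 0 := hε.ne_zero (by omega)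
  have hεl : ε ^ l = 1 := hε.pow_eq_one
  have hε1 : ε ≠ 1 := by
    intro h
    have h2 := Nat.dvd_one.mp ((hε.pow_eq_one_iff_dvd 1).mp (by rw [h, one_pow]))
    omega
  constructor
  · -- the case j ≠ 0
    intro i j hj
    have hEi : eWE ε l i.1 = epsGen ε l i := by rw [eWE, dif_pos i.2]
    have hexp := eW_expand ε hε0 j.1 (epsGen ε l j) (eWE ε l) (eWT ε l j.1)
      (eW_move ε hε0 j) i.1 l
    rw [hEi] at hexp
    rw [hexp]
    rw [Finset.sum_eq_single_of_mem 0 (Finset.mem_range.mpr (by omega))]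
    · simp only [eWccoef, Nat.cast_zero, sub_zero, Finset.range_zero, Finset.prod_empty,
        mul_one, eW_gaussBinom_zero, Nat.sub_zero, zero_mul, add_zero, hEi]
      rw [zpow_mul, zpow_natCast, hεl, one_zpow, one_smul]
    · intro k hk hk0
      have hkl : k ≤ l := by simpa [Nat.lt_succ_iff] using hk
      by_cases hr : -1 ≤ i.1 + (k : ℤ) * j.1 ∧ i.1 + (k : ℤ) * j.1 ≤ (l : ℤ) - 2
      · -- in range: the Gaussian binomial vanishes
        have hq0 : (ε ^ (-j.1) : K) ≠ 0 := zpow_ne_zero _ hε0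
        have hql : ((ε ^ (-j.1) : K)) ^ l = 1 := by
          rw [← zpow_natCast (ε ^ (-j.1)) l, ← zpow_mul]
          exact (hε.zpow_eq_one_iff_dvd _).mpr ⟨-j.1, by ring⟩
        have hqk : ((ε ^ (-j.1) : K)) ^ k ≠ 1 := by
          rw [← zpow_natCast (ε ^ (-j.1)) k, ← zpow_mul]
          intro hone
          have hdvd : (l : ℤ) ∣ -j.1 * k := (hε.zpow_eq_one_iff_dvd _).mp hone
          have hdvd2 : (l : ℤ) ∣ (k : ℤ) * j.1 := by
            obtain ⟨m, hm⟩ := hdvd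
            exact ⟨-m, by linarith [hm]⟩
          obtain ⟨m, hm⟩ := hdvd2
          have hub : (k : ℤ) * j.1 ≤ (l : ℤ) - 1 := by
            have := i.2.1
            linarith [hr.2]
          have hlb : -(l : ℤ) + 1 ≤ (k : ℤ) * j.1 := by
            have := i.2.2
            linarith [hr.1]
          have hm0 : m = 0 := by
            rcases lt_trichotomy m 0 with h | h | h
            · have h1 : m ≤ -1 := by omega
              have h2 : (l : ℤ) * m ≤ (l : ℤ) * (-1) :=
                mul_le_mul_of_nonneg_left h1 (by positivity)
              omega
            · exact h
            · have h1 : (1 : ℤ) ≤ m := by omega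
              have h2 : (l : ℤ) * 1 ≤ (l : ℤ) * m :=
                mul_le_mul_of_nonneg_left h1 (by positivity)
              omega
          rw [hm0, mul_zero] at hm
          rcases mul_eq_zero.mp hm with h | h
          · have : k = 0 := by exact_mod_cast h
            exact hk0 this
          · exact hj h
        have hg : gaussBinom (ε ^ (-j.1)) l k = 0 :=
          eW_gaussBinom_root_eq_zero _ l hql hq0 k hkl hqk
        rw [eWccoef, hg, mul_zero, zero_mul, zero_smul]
      · rw [eWE, dif_neg hr, mul_zero, smul_zero]
  · -- the case j = 0
    intro i
    set μ : K := 1 / (1 - ε) with hμ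
    set e0 : epsUEA K ε l := epsGen ε l ⟨0, by constructor <;> omega⟩ with he0
    set f : epsUEA K ε l := e0 - algebraMap K (epsUEA K ε l) μ with hf
    have hone : (1 : K) - ε ≠ 0 := sub_ne_zero.mpr (Ne.symm hε1)
    -- the basic q-commutation e_i f = ε^{-i} (f e_i)
    have key : ∀ i : WIdx l, epsGen ε l i * f = ε ^ (-i.1) • (f * epsGen ε l i) := by
      intro i
      obtain ⟨hi1, hi2⟩ := i.2
      have hrange : -1 ≤ i.1 + 0 ∧ i.1 + 0 ≤ (l : ℤ) - 2 := by
        constructor <;> omega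
      have h' : ε ^ (i.1 + 1) • (epsGen ε l i * e0)
            - ε ^ ((0 : ℤ) + 1) • (e0 * epsGen ε l i)
          = if h : -1 ≤ i.1 + 0 ∧ i.1 + 0 ≤ (l : ℤ) - 2 then
              (gaussBinom ε (i.1 + 0 + 1).toNat (i.1 + 1).toNat
                - gaussBinom ε (i.1 + 0 + 1).toNat ((0 : ℤ) + 1).toNat) •
                    epsGen ε l ⟨i.1 + 0, h⟩
            else 0 :=
        eW_gen_rel ε l i ⟨0, by constructor <;> omega⟩
      rw [dif_pos hrange] at h'
      have hsub : (⟨i.1 + 0, hrange⟩ : WIdx l) = i := Subtype.ext (add_zero _)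
      rw [hsub, show ((0 : ℤ) + 1).toNat = 1 from rfl,
        show i.1 + 0 + 1 = i.1 + 1 by ring] at h'
      set m : ℕ := (i.1 + 1).toNat with hm
      set C : K := gaussBinom ε m m - gaussBinom ε m 1 with hC0
      have hεm : (ε : K) ^ m = ε ^ (i.1 + 1) := by
        rw [← zpow_natCast, hm, Int.toNat_of_nonneg (by omega)]
      have hCm : C * (1 - ε) = ε ^ (i.1 + 1) - ε := by
        rw [hC0, eW_gaussBinom_self, sub_mul, one_mul, eW_gaussBinom_one_mul, hεm]
        ring
      have hC : C = (ε ^ (i.1 + 1) - ε) * μ := by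
        rw [hμ, ← hCm]
        field_simp
      have e1 : ε ^ (-(i.1 + 1)) * ε ^ (i.1 + 1) = 1 := by
        rw [← zpow_add₀ hε0, show -(i.1 + 1) + (i.1 + 1) = 0 by ring, zpow_zero]
      have e2 : ε ^ (-(i.1 + 1)) * ε = ε ^ (-i.1) := by
        rw [show -i.1 = -(i.1 + 1) + 1 by ring, zpow_add₀ hε0, zpow_one]
      have hsc : ε ^ (-(i.1 + 1)) * C = μ - ε ^ (-i.1) * μ := by
        linear_combination (ε ^ (-(i.1 + 1))) * hC + μ * e1 - μ * e2
      have h3 := sub_eq_iff_eq_add.mp h'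
      have h4 := congrArg (fun z => ε ^ (-(i.1 + 1)) • z) h3
      simp only [smul_add, smul_smul, ← zpow_add₀ hε0] at h4
      rw [show -(i.1 + 1) + (i.1 + 1) = 0 by ring, zpow_zero, one_smul,
        show -(i.1 + 1) + ((0 : ℤ) + 1) = -i.1 by ring] at h4
      rw [hf, Algebra.algebraMap_eq_smul_one, mul_sub, sub_mul, smul_sub,
        mul_smul_comm, smul_mul_assoc, mul_one, one_mul, h4, hsc, smul_smul]
      module
    -- the power commutation
    have powkey : ∀ n : ℕ, epsGen ε l i * f ^ n = (ε ^ (-i.1)) ^ n • (f ^ n * epsGen ε l i) := by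
      intro n
      induction n with
      | zero => simp
      | succ n ihn =>
        rw [pow_succ, ← mul_assoc, ihn, smul_mul_assoc, mul_assoc,
          key i, mul_smul_comm, smul_smul, ← mul_assoc, ← pow_succ, ← pow_succ]
    have := powkey l
    rw [← zpow_natCast (ε ^ (-i.1)) l, ← zpow_mul,
      show -i.1 * l = (l : ℤ) * (-i.1) by ring, zpow_mul, zpow_natCast, hεl, one_zpow,
      one_smul] at this
    exact this
end
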